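/- arXiv:1111.4849 — 9 statements merged into one kernel-verified Lean document; each statement's English description precedes it below -/
import Mathlib

section
/- Fix 0 < q < 1, w ≥ 1, k₁,…,k_w ∈ ℕ, x₁,…,x_w ∈ [0,1] and t ∈ ℝ. Then the family indexed by (n₁,…,n_w) ∈ ℕ^w with terms ∏_{i=1}^{w} B_{k_i,n_i}(x_i; q) t^{n_i}/n_i! is summable, and its sum equals ∏_{i=1}^{w} ((t·[x_i]_q)^{k_i}/k_i!) · exp(t·Σ_{i=1}^{w} [1−x_i]_q); that is, this expression is the generating function of the modified q-Bernstein polynomials of several variables. -/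
open Finset

/-- The `q`-number `[x]_q = (1 - q^x)/(1 - q)` (real exponent). -/
noncomputable def qnum (q x : ℝ) : ℝ := (1 - q ^ x) / (1 - q)

/-- The modified `q`-Bernstein polynomial
`B_{k,n}(x;q) = C(n,k) [x]_q^k [1-x]_q^(n-k)`. -/
noncomputable def qBern (q : ℝ) (k n : ℕ) (x : ℝ) : ℝ :=
  (n.choose k : ℝ) * qnum q x ^ k * qnum q (1 - x) ^ (n - k)

/-! Every factor of the term indexed by `(n₁,…,n_w)` depends on one `nᵢ` only, so the multiple
series is the product of `w` one-variable series; these converge absolutely, which justifies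
multiplying them. In one variable, the terms with `n < k` vanish, and after the shift `n = m + k`
the series is `(t[x]_q)^k/k!` times the exponential series of `t[1-x]_q`. -/

theorem hasSum_choose_mul_pow_mul_pow_div_factorial (b c t : ℝ) (k : ℕ) :
    HasSum (fun n : ℕ => (n.choose k : ℝ) * b ^ k * c ^ (n - k) * t ^ n / n.factorial)
      ((t * b) ^ k / k.factorial * Real.exp (t * c)) := by
  have hlow : ∀ n ∉ Set.range (· + k), (n.choose k : ℝ) * b ^ k * c ^ (n - k) * t ^ n /
      n.factorial = 0 := by
    intro n hn
    have hnk : n < k := by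
      by_contra! h
      exact hn ⟨n - k, Nat.sub_add_cancel h⟩
    simp [Nat.choose_eq_zero_of_lt hnk]
  rw [← (add_left_injective k).hasSum_iff hlow]
  have hshift : ∀ m : ℕ, ((m + k).choose k : ℝ) * b ^ k * c ^ (m + k - k) * t ^ (m + k) /
      (m + k).factorial = (t * b) ^ k / k.factorial * ((t * c) ^ m / m.factorial) := by
    intro m
    rw [add_comm m k, Nat.cast_add_choose, Nat.add_sub_cancel_left]
    field_simp
    ring
  simp only [Function.comp_def, hshift]
  exact ((Real.exp_eq_exp_ℝ ▸ NormedSpace.expSeries_div_hasSum_exp (t * c)).mul_left _)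

theorem summable_norm_choose_mul_pow_mul_pow_div_factorial (b c t : ℝ) (k : ℕ) :
    Summable fun n : ℕ => ‖(n.choose k : ℝ) * b ^ k * c ^ (n - k) * t ^ n / n.factorial‖ :=
  (hasSum_choose_mul_pow_mul_pow_div_factorial |b| |c| |t| k).summable.congr fun _ => by
    simp

section ProdApply

variable {R β : Type*} [NormedCommRing R]

theorem summable_norm_prod_apply : ∀ {n : ℕ} {f : Fin n → β → R},
    (∀ i, Summable fun m => ‖f i m‖) → Summable fun v : Fin n → β => ‖∏ i, f i (v i)‖
  | 0, _, _ => .of_finite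
  | _ + 1, f, hf => by
    rw [← (Fin.consEquiv fun _ => β).summable_iff]
    simpa [Function.comp_def, Fin.prod_univ_succ] using
      (hf 0).mul_norm (summable_norm_prod_apply fun i => hf i.succ)

theorem hasSum_prod_apply_of_summable_norm [CompleteSpace R] :
    ∀ {n : ℕ} {f : Fin n → β → R} {a : Fin n → R},
    (∀ i, HasSum (f i) (a i)) → (∀ i, Summable fun m => ‖f i m‖) →
      HasSum (fun v : Fin n → β => ∏ i, f i (v i)) (∏ i, a i)
  | 0, _, _, _, _ => by simp [hasSum_unique]
  | _ + 1, f, a, ha, hf => by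
    rw [← (Fin.consEquiv fun _ => β).hasSum_iff, Fin.prod_univ_succ]
    simpa [Function.comp_def, Fin.prod_univ_succ] using
      (ha 0).mul (hasSum_prod_apply_of_summable_norm (fun i => ha i.succ) fun i => hf i.succ)
        ((hf 0).mul_norm (summable_norm_prod_apply fun i => hf i.succ)).of_norm

end ProdApply

theorem modified_qBernstein_generating_function_general
    (q : ℝ)
    (w : ℕ) (k : Fin w → ℕ) (x : Fin w → ℝ)
    (t : ℝ) :
    HasSum
      (fun n : Fin w → ℕ =>
        ∏ i, qBern q (k i) (n i) (x i) * t ^ (n i) / ((n i).factorial : ℝ))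
      ((∏ i, (t * qnum q (x i)) ^ (k i) / ((k i).factorial : ℝ)) *
        Real.exp (t * ∑ i, qnum q (1 - x i))) := by
  rw [mul_sum, Real.exp_sum, ← prod_mul_distrib]
  exact hasSum_prod_apply_of_summable_norm
    (f := fun i m => qBern q (k i) m (x i) * t ^ m / m.factorial)
    (fun i => hasSum_choose_mul_pow_mul_pow_div_factorial _ _ t (k i))
    (fun i => summable_norm_choose_mul_pow_mul_pow_div_factorial _ _ t (k i))

/-- The generating function of modified `q`-Bernstein polynomials of several
variables: the family `(n₁,…,n_w) ↦ ∏ᵢ B_{kᵢ,nᵢ}(xᵢ;q) t^{nᵢ}/nᵢ!` is summable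
with sum `∏ᵢ ((t [xᵢ]_q)^{kᵢ}/kᵢ!) · exp(t Σᵢ [1−xᵢ]_q)`. -/
theorem modified_qBernstein_generating_function
    (q : ℝ) (hq0 : 0 < q) (hq1 : q < 1)
    (w : ℕ) (hw : 1 ≤ w) (k : Fin w → ℕ) (x : Fin w → ℝ)
    (hx : ∀ i, x i ∈ Set.Icc (0 : ℝ) 1) (t : ℝ) :
    HasSum
      (fun n : Fin w → ℕ =>
        ∏ i, qBern q (k i) (n i) (x i) * t ^ (n i) / ((n i).factorial : ℝ))
      ((∏ i, (t * qnum q (x i)) ^ (k i) / ((k i).factorial : ℝ)) *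
        Real.exp (t * ∑ i, qnum q (1 - x i))) :=
  modified_qBernstein_generating_function_general q w k x t
end

section
/- (Recurrence formula) Let 0 < q < 1, w ≥ 1, and for i = 1,…,w let k_i, n_i ∈ ℕ with k_i ≥ 1 and n_i ≥ 1, and x_i ∈ [0,1]. Then B_{k₁,…,k_w; n₁,…,n_w}(x₁,…,x_w; q) = ∏_{i=1}^{w} ( [1−x_i]_q · B_{k_i, n_i−1}(x_i; q) + [x_i]_q · B_{k_i−1, n_i−1}(x_i; q) ). -/
open Finset

lemma qBern_rec (q : ℝ) (k n : ℕ) (hk : 1 ≤ k) (hn : 1 ≤ n) (x : ℝ) :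
    qBern q k n x =
      qnum q (1 - x) * qBern q k (n - 1) x + qnum q x * qBern q (k - 1) (n - 1) x := by
  obtain ⟨j, rfl⟩ := Nat.exists_eq_add_of_le hk
  obtain ⟨m, rfl⟩ := Nat.exists_eq_add_of_le hn
  simp only [qBern, Nat.add_sub_cancel_left, Nat.add_sub_cancel]
  set X := qnum q x
  set Y := qnum q (1 - x)
  rcases le_or_gt (1 + j) m with h | h
  · have h1 : 1 + m - (1 + j) = (m - (1 + j)) + 1 := by omega
    have h2 : m - j = (m - (1 + j)) + 1 := by omega
    have h3 : (1 + m).choose (1 + j) = m.choose j + m.choose (j + 1) := by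
      rw [show 1 + m = m + 1 from by ring, show 1 + j = j + 1 from by ring,
        Nat.choose_succ_succ]
    rw [h1, h2, h3, show 1 + j = j + 1 from by ring]
    push_cast
    ring
  · rcases le_or_gt (1 + j) (1 + m) with h' | h'
    · have hjm : j = m := by omega
      subst hjm
      simp [Nat.choose_succ_self, show 1+j = j+1 from by ring, Nat.choose_self,
        pow_succ]
      ring
    · have c1 : (1 + m).choose (1 + j) = 0 := Nat.choose_eq_zero_of_lt h'
      have c2 : m.choose (1 + j) = 0 := Nat.choose_eq_zero_of_lt (by omega)
      have c3 : m.choose j = 0 := Nat.choose_eq_zero_of_lt (by omega)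
      simp [c1, c2, c3]

/-- Recurrence formula for the modified `q`-Bernstein polynomials of several
variables. -/
theorem modified_qBernstein_recurrence
    (q : ℝ) (hq0 : 0 < q) (hq1 : q < 1)
    (w : ℕ) (hw : 1 ≤ w) (k n : Fin w → ℕ)
    (hk : ∀ i, 1 ≤ k i) (hn : ∀ i, 1 ≤ n i)
    (x : Fin w → ℝ) (hx : ∀ i, x i ∈ Set.Icc (0 : ℝ) 1) :
    ∏ i, qBern q (k i) (n i) (x i) =
      ∏ i, (qnum q (1 - x i) * qBern q (k i) (n i - 1) (x i) +
        qnum q (x i) * qBern q (k i - 1) (n i - 1) (x i)) := by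
  exact Finset.prod_congr rfl fun i _ => qBern_rec q (k i) (n i) (hk i) (hn i) (x i)
end

section
/- Let 0 < q < 1, w ≥ 1, n₁,…,n_w ∈ ℕ and x₁,…,x_w ∈ [0,1]. Then Σ_{k₁=0}^{n₁} Σ_{k₂=0}^{n₂} ⋯ Σ_{k_w=0}^{n_w} B_{k₁,…,k_w; n₁,…,n_w}(x₁,…,x_w; q) = ∏_{i=1}^{w} ( 1 + (1−q)·[x_i]_q·[1−x_i]_q )^{n_i}. -/
open Finset

lemma qnum_add_key (q x : ℝ) (hq0 : 0 < q) (hq1 : q < 1) :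
    qnum q x + qnum q (1 - x) = 1 + (1 - q) * qnum q x * qnum q (1 - x) := by
  have hq : (1 : ℝ) - q ≠ 0 := by linarith
  have hmul : q ^ x * q ^ (1 - x) = q := by
    rw [← Real.rpow_add hq0]; simp
  unfold qnum
  field_simp
  ring_nf
  nlinarith [hmul]

lemma qBern_sum (q x : ℝ) (hq0 : 0 < q) (hq1 : q < 1) (n : ℕ) :
    ∑ k ∈ Finset.Icc 0 n, qBern q k n x =
      (1 + (1 - q) * qnum q x * qnum q (1 - x)) ^ n := by
  rw [← qnum_add_key q x hq0 hq1, add_pow, Nat.Icc_eq_range' ]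
  simp only [Finset.range_eq_Ico, zero_add]
  refine Finset.sum_congr rfl fun k _ => ?_
  unfold qBern; ring

/-- The total sum of the modified `q`-Bernstein polynomials of several
variables equals `∏ᵢ (1 + (1−q)[xᵢ]_q[1−xᵢ]_q)^{nᵢ}`. -/
theorem modified_qBernstein_total_sum
    (q : ℝ) (hq0 : 0 < q) (hq1 : q < 1)
    (w : ℕ) (hw : 1 ≤ w) (n : Fin w → ℕ)
    (x : Fin w → ℝ) (hx : ∀ i, x i ∈ Set.Icc (0 : ℝ) 1) :
    ∑ k ∈ Finset.Icc (0 : Fin w → ℕ) n, ∏ i, qBern q (k i) (n i) (x i) =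
      ∏ i, (1 + (1 - q) * qnum q (x i) * qnum q (1 - x i)) ^ (n i) := by
  rw [Pi.Icc_eq]
  simp only [Pi.zero_apply]
  exact (Finset.prod_univ_sum (fun i => Finset.Icc 0 (n i))
      (fun i k => qBern q k (n i) (x i))).symm.trans
    (Finset.prod_congr rfl fun i _ => qBern_sum q (x i) hq0 hq1 (n i))
end

section
/- (Contour integral representation) Let 0 < q < 1, x ∈ [0,1], k, n ∈ ℕ, and let r > 0. Then (n!/(2πi)) · ∮_{|ξ|=r} ((ξ·[x]_q)^k / k!) · exp(ξ·[1−x]_q) · ξ^{−(n+1)} dξ = B_{k,n}(x; q), where the integral is the circle integral over the circle of radius r centered at the origin, traversed in the positive direction, and the real constants [x]_q, [1−x]_q are regarded as complex numbers. -/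
open Finset

/-! The integrand is `f z / z ^ (n + 1)` with `f z = (z [x]_q) ^ k / k! · exp (z [1-x]_q)` entire,
so by Cauchy's integral formula the left-hand side is the `n`-th derivative of `f` at `0`.
By the Leibniz rule only the term in which `z ^ k` is differentiated exactly `k` times survives,
giving `C(n,k) [x]_q ^ k [1-x]_q ^ (n-k)`. -/

open Complex Metric

theorem DiffContOnCl.factorial_div_two_pi_I_mul_circleIntegral_mul_zpow {f : ℂ → ℂ} {c : ℂ}
    {R : ℝ} (hR : 0 < R) (n : ℕ) (hf : DiffContOnCl ℂ f (ball c R)) :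
    (n.factorial : ℂ) / (2 * Real.pi * I) * (∮ z in C(c, R), f z * (z - c) ^ (-(n + 1 : ℤ))) =
      iteratedDeriv n f c := by
  have hcauchy := hf.circleIntegral_one_div_sub_center_pow_smul hR n
  have hintegrand : (∮ z in C(c, R), f z * (z - c) ^ (-(n + 1 : ℤ))) =
      ∮ z in C(c, R), (1 / (z - c) ^ (n + 1)) • f z := by
    congr 1 with z
    rw [smul_eq_mul, zpow_neg, one_div, mul_comm]
    norm_cast
  rw [hintegrand, hcauchy, smul_eq_mul]
  field_simp [two_pi_I_ne_zero, Nat.factorial_ne_zero]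

theorem iteratedDeriv_pow_mul_cexp_const_mul_zero (c : ℂ) (k n : ℕ) :
    iteratedDeriv n (fun z => z ^ k * exp (c * z)) 0 = n.choose k * k.factorial * c ^ (n - k) := by
  rw [iteratedDeriv_fun_mul (by fun_prop) (by fun_prop)]
  simp only [iteratedDeriv_fun_pow_zero, iteratedDeriv_cexp_const_mul, mul_zero, exp_zero, mul_one]
  rw [Finset.sum_eq_single k]
  · simp
  · intro i _ hik
    simp [hik]
  · intro hk
    simp [Nat.choose_eq_zero_of_lt (by simpa using hk : n < k)]

theorem iteratedDeriv_mul_pow_div_factorial_mul_cexp_zero (a c : ℂ) (k n : ℕ) :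
    iteratedDeriv n (fun z => (z * a) ^ k / k.factorial * exp (z * c)) 0 =
      n.choose k * a ^ k * c ^ (n - k) := by
  have hf : (fun z => (z * a) ^ k / k.factorial * exp (z * c)) =
      fun z => a ^ k / k.factorial * (z ^ k * exp (c * z)) := by
    ext z
    rw [mul_comm z c]
    ring
  rw [hf, iteratedDeriv_const_mul_field, iteratedDeriv_pow_mul_cexp_const_mul_zero]
  field_simp [Nat.factorial_ne_zero]

theorem modified_qBernstein_contour_integral_general
    (q : ℝ)
    (x : ℝ) (k n : ℕ) (r : ℝ) (hr : 0 < r) :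
    (n.factorial : ℂ) / (2 * Real.pi * Complex.I) *
      (∮ z in C(0, r),
        (z * (qnum q x : ℂ)) ^ k / (k.factorial : ℂ) *
          Complex.exp (z * (qnum q (1 - x) : ℂ)) * z ^ (-(n + 1 : ℤ))) =
      (qBern q k n x : ℂ) := by
  have hf : Differentiable ℂ fun z : ℂ =>
      (z * (qnum q x : ℂ)) ^ k / (k.factorial : ℂ) * exp (z * (qnum q (1 - x) : ℂ)) := by
    fun_prop
  have hcauchy := hf.diffContOnCl.factorial_div_two_pi_I_mul_circleIntegral_mul_zpow hr n (c := 0)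
  simp only [sub_zero, iteratedDeriv_mul_pow_div_factorial_mul_cexp_zero] at hcauchy
  rw [hcauchy, qBern]
  push_cast
  rfl

/-- Contour integral representation of the modified `q`-Bernstein polynomials:
`(n!/(2πi)) ∮_{|ξ|=r} ((ξ[x]_q)^k/k!) e^{ξ[1−x]_q} ξ^{−(n+1)} dξ = B_{k,n}(x;q)`. -/
theorem modified_qBernstein_contour_integral
    (q : ℝ) (hq0 : 0 < q) (hq1 : q < 1)
    (x : ℝ) (hx : x ∈ Set.Icc (0 : ℝ) 1) (k n : ℕ) (r : ℝ) (hr : 0 < r) :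
    (n.factorial : ℂ) / (2 * Real.pi * Complex.I) *
      (∮ z in C(0, r),
        (z * (qnum q x : ℂ)) ^ k / (k.factorial : ℂ) *
          Complex.exp (z * (qnum q (1 - x) : ℂ)) * z ^ (-(n + 1 : ℤ))) =
      (qBern q k n x : ℂ) :=
  modified_qBernstein_contour_integral_general q x k n r hr
end

section
/- Let 0 < q < 1, w ≥ 1, and for i = 1,…,w let k_i, n_i ∈ ℕ with k_i ≥ 1, and x_i ∈ [0,1). Then B_{k₁,…,k_w; n₁,…,n_w}(x₁,…,x_w; q) = ∏_{i=1}^{w} ( ((n_i − k_i + 1)/k_i) · ([x_i]_q / [1−x_i]_q) ) · B_{k₁−1,…,k_w−1; n₁,…,n_w}(x₁,…,x_w; q), where n_i − k_i + 1 is computed in ℤ and then cast to ℝ. -/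
open Finset

/-- Unlike in `Nat.choose_succ_right_eq`, `n - m` is not truncated; both sides vanish when `n < m`. -/
theorem Nat.cast_choose_succ_mul {R : Type*} [CommRing R] (n m : ℕ) :
    (n.choose (m + 1) : R) * (m + 1) = n.choose m * (n - m) := by
  rcases le_or_gt m n with hmn | hnm
  · have h := congrArg (Nat.cast (R := R)) (Nat.choose_succ_right_eq n m)
    push_cast [Nat.cast_sub hmn] at h
    exact h
  · simp [Nat.choose_eq_zero_of_lt hnm, Nat.choose_eq_zero_of_lt (hnm.trans (Nat.lt_succ_self m))]

theorem choose_mul_pow_mul_pow_eq_lower_index {K : Type*} [Field K] [CharZero K]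
    (n k : ℕ) (hk : 1 ≤ k) (X Y : K) (hY : Y ≠ 0) :
    (n.choose k : K) * X ^ k * Y ^ (n - k) =
      (((n : ℤ) - (k : ℤ) + 1 : ℤ) : K) / (k : K) * (X / Y) *
        ((n.choose (k - 1) : K) * X ^ (k - 1) * Y ^ (n - (k - 1))) := by
  obtain ⟨m, rfl⟩ := Nat.exists_eq_add_of_le' hk
  have hchoose := Nat.cast_choose_succ_mul (R := K) n m
  have hcoeff : (((n : ℤ) - ((m + 1 : ℕ) : ℤ) + 1 : ℤ) : K) = n - m := by push_cast; ring
  rw [hcoeff, Nat.add_sub_cancel, Nat.cast_add_one]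
  rcases le_or_gt (m + 1) n with hmn | hnm
  · rw [show n - m = n - (m + 1) + 1 by omega, pow_succ Y]
    field_simp
    linear_combination X ^ (m + 1) * hchoose
  · rw [Nat.choose_eq_zero_of_lt hnm, Nat.cast_zero, zero_mul] at hchoose ⊢
    linear_combination (X / Y * X ^ m * Y ^ (n - m) / (m + 1)) * hchoose

theorem qnum_pos {q : ℝ} (hq0 : 0 < q) (hq1 : q < 1) {y : ℝ} (hy : 0 < y) : 0 < qnum q y :=
  div_pos (sub_pos.2 (Real.rpow_lt_one hq0.le hq1 hy)) (sub_pos.2 hq1)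

theorem qBern_eq_lower_index {q : ℝ} (hq0 : 0 < q) (hq1 : q < 1) {k : ℕ} (hk : 1 ≤ k) (n : ℕ)
    {x : ℝ} (hx : x < 1) :
    qBern q k n x =
      (((n : ℤ) - (k : ℤ) + 1 : ℤ) : ℝ) / (k : ℝ) * (qnum q x / qnum q (1 - x)) *
        qBern q (k - 1) n x :=
  choose_mul_pow_mul_pow_eq_lower_index n k hk _ _ (qnum_pos hq0 hq1 (sub_pos.2 hx)).ne'

theorem modified_qBernstein_lower_index_general
    (q : ℝ) (hq0 : 0 < q) (hq1 : q < 1)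
    (w : ℕ) (k n : Fin w → ℕ) (hk : ∀ i, 1 ≤ k i)
    (x : Fin w → ℝ) (hx : ∀ i, x i ∈ Set.Ico (0 : ℝ) 1) :
    ∏ i, qBern q (k i) (n i) (x i) =
      (∏ i, (((n i : ℤ) - (k i : ℤ) + 1 : ℤ) : ℝ) / (k i : ℝ) *
        (qnum q (x i) / qnum q (1 - x i))) *
      ∏ i, qBern q (k i - 1) (n i) (x i) := by
  rw [← prod_mul_distrib]
  exact prod_congr rfl fun i _ => qBern_eq_lower_index hq0 hq1 (hk i) (n i) (hx i).2

/-- The modified `q`-Bernstein polynomials of several variables as a multiple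
of the polynomials with lowered indices:
`B_{k;n}(x;q) = ∏ᵢ ((nᵢ−kᵢ+1)/kᵢ)·([xᵢ]_q/[1−xᵢ]_q) · B_{k−1;n}(x;q)`. -/
theorem modified_qBernstein_lower_index
    (q : ℝ) (hq0 : 0 < q) (hq1 : q < 1)
    (w : ℕ) (hw : 1 ≤ w) (k n : Fin w → ℕ) (hk : ∀ i, 1 ≤ k i)
    (x : Fin w → ℝ) (hx : ∀ i, x i ∈ Set.Ico (0 : ℝ) 1) :
    ∏ i, qBern q (k i) (n i) (x i) =
      (∏ i, (((n i : ℤ) - (k i : ℤ) + 1 : ℤ) : ℝ) / (k i : ℝ) *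
        (qnum q (x i) / qnum q (1 - x i))) *
      ∏ i, qBern q (k i - 1) (n i) (x i) :=
  modified_qBernstein_lower_index_general q hq0 hq1 w k n hk x hx
end

section
/- Let 0 < q < 1, w ≥ 1, and for i = 1,…,w let k_i, n_i ∈ ℕ and x_i ∈ [0,1]. Then B_{k₁,…,k_w; n₁,…,n_w}(x₁,…,x_w; q) = Σ_{l₁=k₁}^{n₁} Σ_{l₂=k₂}^{n₂} ⋯ Σ_{l_w=k_w}^{n_w} ∏_{i=1}^{w} C(n_i,l_i) · C(l_i,k_i) · (−1)^{l_i−k_i} · q^{(l_i−k_i)(1−x_i)} · [x_i]_q^{l_i}. -/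
open Finset

/-
Since `q^(1-x) q^x = q`, one has `[1-x]_q = 1 - q^(1-x) [x]_q`. Expanding
`C(n,k) a^k (1 - b a)^(n-k)` by the binomial theorem and reindexing with `l = k + j`,
`C(n,k) C(n-k,j) = C(n,l) C(l,k)` gives the one-variable expansion; the several-variable one
is its product over the coordinates, distributed over the box `Icc k n`.
-/

theorem choose_mul_pow_mul_one_sub_mul_pow {R : Type*} [CommRing R] (a b : R) (k n : ℕ) :
    (n.choose k : R) * a ^ k * (1 - b * a) ^ (n - k) =
      ∑ l ∈ Icc k n, (n.choose l : R) * (l.choose k : R) * (-1) ^ (l - k) * b ^ (l - k) * a ^ l := by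
  rcases le_or_gt k n with hkn | hnk
  · rw [← Ico_add_one_right_eq_Icc, sum_Ico_eq_sum_range, show n + 1 - k = n - k + 1 by omega,
      sub_eq_neg_add, add_pow, mul_sum]
    refine sum_congr rfl fun j hj => ?_
    have hchoose : (n.choose (k + j) : R) * ((k + j).choose k : R) =
        (n.choose k : R) * ((n - k).choose j : R) := by
      rw [← Nat.cast_mul, ← Nat.cast_mul, Nat.choose_mul (by omega), Nat.add_sub_cancel_left]
    rw [Nat.add_sub_cancel_left, hchoose]
    ring
  · rw [Icc_eq_empty (by omega), Nat.choose_eq_zero_of_lt hnk]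
    simp

theorem qnum_one_sub {q : ℝ} (hq0 : 0 < q) (hq1 : q ≠ 1) (x : ℝ) :
    qnum q (1 - x) = 1 - q ^ (1 - x) * qnum q x := by
  have hq : (1 : ℝ) - q ≠ 0 := sub_ne_zero.mpr hq1.symm
  have hmul : q ^ (1 - x) * q ^ x = q := by
    rw [← Real.rpow_add hq0, sub_add_cancel, Real.rpow_one]
  unfold qnum
  field_simp
  linear_combination -hmul

theorem qBern_eq_sum {q : ℝ} (hq0 : 0 < q) (hq1 : q ≠ 1) (k n : ℕ) (x : ℝ) :
    qBern q k n x =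
      ∑ l ∈ Icc k n, (n.choose l : ℝ) * (l.choose k : ℝ) * (-1) ^ (l - k) *
        q ^ (((l - k : ℕ) : ℝ) * (1 - x)) * qnum q x ^ l := by
  have hrpow (m : ℕ) : q ^ ((m : ℝ) * (1 - x)) = (q ^ (1 - x)) ^ m := by
    rw [mul_comm, Real.rpow_mul hq0.le, Real.rpow_natCast]
  simp only [qBern, qnum_one_sub hq0 hq1, hrpow]
  exact choose_mul_pow_mul_one_sub_mul_pow _ _ k n

theorem modified_qBernstein_expansion_general
    (q : ℝ) (hq0 : 0 < q) (hq1 : q < 1)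
    (w : ℕ) (k n : Fin w → ℕ)
    (x : Fin w → ℝ) :
    ∏ i, qBern q (k i) (n i) (x i) =
      ∑ l ∈ Finset.Icc k n,
        ∏ i, ((n i).choose (l i) : ℝ) * ((l i).choose (k i) : ℝ) *
          (-1 : ℝ) ^ (l i - k i) * q ^ (((l i - k i : ℕ) : ℝ) * (1 - x i)) *
          qnum q (x i) ^ (l i) := by
  simp only [qBern_eq_sum hq0 hq1.ne]
  rw [prod_univ_sum, Pi.Icc_eq]

/-- Expansion of the modified `q`-Bernstein polynomials of several variables:
`B_{k;n}(x;q) = Σ_{l₁=k₁}^{n₁} ⋯ Σ_{l_w=k_w}^{n_w}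
  ∏ᵢ C(nᵢ,lᵢ) C(lᵢ,kᵢ) (−1)^{lᵢ−kᵢ} q^{(lᵢ−kᵢ)(1−xᵢ)} [xᵢ]_q^{lᵢ}`. -/
theorem modified_qBernstein_expansion
    (q : ℝ) (hq0 : 0 < q) (hq1 : q < 1)
    (w : ℕ) (hw : 1 ≤ w) (k n : Fin w → ℕ)
    (x : Fin w → ℝ) (hx : ∀ i, x i ∈ Set.Icc (0 : ℝ) 1) :
    ∏ i, qBern q (k i) (n i) (x i) =
      ∑ l ∈ Finset.Icc k n,
        ∏ i, ((n i).choose (l i) : ℝ) * ((l i).choose (k i) : ℝ) *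
          (-1 : ℝ) ^ (l i - k i) * q ^ (((l i - k i : ℕ) : ℝ) * (1 - x i)) *
          qnum q (x i) ^ (l i) :=
  modified_qBernstein_expansion_general q hq0 hq1 w k n x
end

section
/- Let 0 < q < 1, w ≥ 1, and for i = 1,…,w let n_i ∈ ℕ with n_i ≥ 1 and x_i ∈ [0,1]. Then Σ_{k₁=1}^{n₁} Σ_{k₂=1}^{n₂} ⋯ Σ_{k_w=1}^{n_w} ∏_{i=1}^{w} (k_i/n_i) · B_{k₁,…,k_w; n₁,…,n_w}(x₁,…,x_w; q) = ∏_{i=1}^{w} [x_i]_q · ( [x_i]_q + [1−x_i]_q )^{n_i−1}. -/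
open Finset

lemma one_var (X Y : ℝ) (m : ℕ) :
    ∑ k ∈ Finset.Icc 1 (m + 1),
        (k : ℝ) / (m + 1 : ℝ) * ((((m + 1).choose k : ℝ)) * X ^ k * Y ^ (m + 1 - k)) =
      X * (X + Y) ^ m := by
  have hm1 : ((m : ℝ) + 1) ≠ 0 := by positivity
  have h1 : ∑ k ∈ Finset.Icc 1 (m + 1),
      (k : ℝ) / (m + 1 : ℝ) * ((((m + 1).choose k : ℝ)) * X ^ k * Y ^ (m + 1 - k)) =
      ∑ j ∈ Finset.range (m + 1),
        ((m.choose j : ℝ)) * X ^ (j + 1) * Y ^ (m - j) := by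
    rw [← Finset.Ico_add_one_right_eq_Icc, Finset.sum_Ico_eq_sum_range]
    simp only [Nat.add_sub_cancel, Nat.succ_sub_one]
    refine Finset.sum_congr rfl fun j hj => ?_
    have h1j : 1 + j = j + 1 := by omega
    have hsub : m + 1 - (j + 1) = m - j := by omega
    rw [h1j, hsub, div_mul_eq_mul_div, div_eq_iff hm1]
    have hc : ((m + 1 : ℕ) * m.choose j : ℕ) = ((m + 1).choose (j + 1) * (j + 1) : ℕ) :=
      Nat.add_one_mul_choose_eq m j
    have hc' : ((m : ℝ) + 1) * (m.choose j : ℝ) =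
        ((m + 1).choose (j + 1) : ℝ) * ((j : ℝ) + 1) := by exact_mod_cast hc
    push_cast
    linear_combination (-(X ^ (j + 1) * Y ^ (m - j))) * hc'
  rw [h1, add_pow, Finset.mul_sum]
  exact Finset.sum_congr rfl fun j hj => by ring

/-- First degree evaluation formula for the modified `q`-Bernstein polynomials
of several variables. -/
theorem modified_qBernstein_first_moment
    (q : ℝ) (hq0 : 0 < q) (hq1 : q < 1)
    (w : ℕ) (hw : 1 ≤ w) (n : Fin w → ℕ) (hn : ∀ i, 1 ≤ n i)
    (x : Fin w → ℝ) (hx : ∀ i, x i ∈ Set.Icc (0 : ℝ) 1) :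
    ∑ k ∈ Finset.Icc (fun _ => 1 : Fin w → ℕ) n,
        ∏ i, ((k i : ℝ) / (n i : ℝ)) * qBern q (k i) (n i) (x i) =
      ∏ i, qnum q (x i) * (qnum q (x i) + qnum q (1 - x i)) ^ (n i - 1) := by
  rw [Pi.Icc_eq, ← Finset.prod_univ_sum (fun i => Finset.Icc 1 (n i))
      (fun i j => (j : ℝ) / (n i : ℝ) * qBern q j (n i) (x i))]
  refine Finset.prod_congr rfl fun i _ => ?_
  obtain ⟨m, hm⟩ : ∃ m, n i = m + 1 := ⟨n i - 1, by have := hn i; omega⟩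
  rw [hm]
  simp only [qBern, Nat.add_sub_cancel]
  have := one_var (qnum q (x i)) (qnum q (1 - x i)) m
  push_cast at this ⊢
  convert this using 2
end

section
/- Let 0 < q < 1, w ≥ 1, and for i = 1,…,w let n_i ∈ ℕ with n_i ≥ 2 and x_i ∈ [0,1]. Then Σ_{k₁=2}^{n₁} Σ_{k₂=2}^{n₂} ⋯ Σ_{k_w=2}^{n_w} ∏_{i=1}^{w} ( C(k_i,2)/C(n_i,2) ) · B_{k₁,…,k_w; n₁,…,n_w}(x₁,…,x_w; q) = ∏_{i=1}^{w} [x_i]_q^2 · ( [x_i]_q + [1−x_i]_q )^{n_i−2}. -/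
open Finset

/-! The sum over the box `∏ i, [2, n i]` factors into one-variable sums. In each of them
`C(k,m) C(n,k) = C(n,m) C(n-m,k-m)` pulls `C(n,m) [x]_q^m` out of the sum, and what remains is
the binomial expansion of `([x]_q + [1-x]_q)^(n-m)`. -/

theorem sum_Icc_choose_mul_choose_mul_pow {R : Type*} [CommSemiring R] (a b : R) (m n : ℕ) :
    ∑ k ∈ Icc m n, (k.choose m : R) * (n.choose k * a ^ k * b ^ (n - k)) =
      n.choose m * a ^ m * (a + b) ^ (n - m) := by
  rcases lt_or_ge n m with hnm | hmn
  · simp [Icc_eq_empty_of_lt hnm, Nat.choose_eq_zero_of_lt hnm]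
  rw [← Ico_add_one_right_eq_Icc, sum_Ico_eq_sum_range, show n + 1 - m = n - m + 1 by omega,
    add_pow, mul_sum]
  refine sum_congr rfl fun j _ => ?_
  have hchoose : (n.choose (m + j) : R) * (m + j).choose m = n.choose m * (n - m).choose j := by
    simpa using congrArg (Nat.cast : ℕ → R) (Nat.choose_mul (n := n) (Nat.le_add_right m j))
  rw [← Nat.sub_sub, pow_add]
  calc ((m + j).choose m : R) * (n.choose (m + j) * (a ^ m * a ^ j) * b ^ (n - m - j))
      = (n.choose (m + j) * (m + j).choose m : R) * (a ^ m * a ^ j * b ^ (n - m - j)) := by ring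
    _ = n.choose m * a ^ m * (a ^ j * b ^ (n - m - j) * (n - m).choose j) := by
      rw [hchoose]; ring

theorem sum_Icc_choose_div_choose_mul_bernstein {K : Type*} [Field K] [CharZero K] (a b : K)
    {m n : ℕ} (hmn : m ≤ n) :
    ∑ k ∈ Icc m n, (k.choose m : K) / n.choose m * (n.choose k * a ^ k * b ^ (n - k)) =
      a ^ m * (a + b) ^ (n - m) := by
  have hchoose : (n.choose m : K) ≠ 0 := Nat.cast_ne_zero.mpr (Nat.choose_pos hmn).ne'
  simp_rw [div_mul_eq_mul_div, ← sum_div, sum_Icc_choose_mul_choose_mul_pow, mul_assoc]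
  exact mul_div_cancel_left₀ _ hchoose

theorem modified_qBernstein_second_moment_general
    (q : ℝ)
    (w : ℕ) (n : Fin w → ℕ) (hn : ∀ i, 2 ≤ n i)
    (x : Fin w → ℝ) :
    ∑ k ∈ Finset.Icc (fun _ => 2 : Fin w → ℕ) n,
        ∏ i, (((k i).choose 2 : ℝ) / ((n i).choose 2 : ℝ)) *
          qBern q (k i) (n i) (x i) =
      ∏ i, qnum q (x i) ^ 2 * (qnum q (x i) + qnum q (1 - x i)) ^ (n i - 2) := by
  rw [Pi.Icc_eq, ← prod_univ_sum (fun i => Icc 2 (n i))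
    (fun i k => (k.choose 2 : ℝ) / (n i).choose 2 * qBern q k (n i) (x i))]
  exact prod_congr rfl fun i _ => sum_Icc_choose_div_choose_mul_bernstein _ _ (hn i)

/-- Second degree evaluation formula for the modified `q`-Bernstein polynomials
of several variables. -/
theorem modified_qBernstein_second_moment
    (q : ℝ) (hq0 : 0 < q) (hq1 : q < 1)
    (w : ℕ) (hw : 1 ≤ w) (n : Fin w → ℕ) (hn : ∀ i, 2 ≤ n i)
    (x : Fin w → ℝ) (hx : ∀ i, x i ∈ Set.Icc (0 : ℝ) 1) :
    ∑ k ∈ Finset.Icc (fun _ => 2 : Fin w → ℕ) n,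
        ∏ i, (((k i).choose 2 : ℝ) / ((n i).choose 2 : ℝ)) *
          qBern q (k i) (n i) (x i) =
      ∏ i, qnum q (x i) ^ 2 * (qnum q (x i) + qnum q (1 - x i)) ^ (n i - 2) :=
  modified_qBernstein_second_moment_general q w n hn x
end

section
/- Let 0 < q < 1, x ∈ ℝ and n ∈ ℕ. Then [x]_q^n = Σ_{k=0}^{n} q^{C(k,2)} · ( ∏_{j=0}^{k−1} [x−j]_q ) · ( Σ_{i=0}^{k} (−1)^i q^{C(i,2)} · binom(k,i)_q · [k−i]_q^n ) · q^{−C(k,2)}; equivalently, [x]_q^n = Σ_{k=0}^{n} q^{C(k,2)} · binom(x,k)_q · [k]_q! · S(n,k;q), where binom(x,k)_q = ( ∏_{j=0}^{k−1} [x−j]_q ) / [k]_q! and S(n,k;q) = ( q^{−C(k,2)} / [k]_q! ) · Σ_{i=0}^{k} (−1)^i q^{C(i,2)} binom(k,i)_q [k−i]_q^n. -/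
open Finset

/-- The `q`-factorial `[n]_q! = [1]_q [2]_q ⋯ [n]_q`. -/
noncomputable def qfac (q : ℝ) (n : ℕ) : ℝ :=
  ∏ j ∈ Finset.range n, qnum q ((j : ℝ) + 1)

/-- The Gaussian binomial coefficient `binom(n,k)_q = [n]_q!/([k]_q!·[n−k]_q!)`. -/
noncomputable def qbinom (q : ℝ) (n k : ℕ) : ℝ :=
  qfac q n / (qfac q k * qfac q (n - k))

/-- The Gaussian binomial coefficient with real upper argument,
`binom(x,k)_q = ([x]_q [x−1]_q ⋯ [x−k+1]_q)/[k]_q!`. -/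
noncomputable def qbinomR (q x : ℝ) (k : ℕ) : ℝ :=
  (∏ j ∈ Finset.range k, qnum q (x - (j : ℝ))) / qfac q k

/-- The `q`-extension of the second kind Stirling numbers,
`S(n,k;q) = (q^{−C(k,2)}/[k]_q!) Σ_{i=0}^{k} (−1)^i q^{C(i,2)} binom(k,i)_q [k−i]_q^n`. -/
noncomputable def qStirling (q : ℝ) (n k : ℕ) : ℝ :=
  ((q ^ k.choose 2)⁻¹ / qfac q k) *
    ∑ i ∈ Finset.range (k + 1),
      (-1 : ℝ) ^ i * q ^ i.choose 2 * qbinom q k i * qnum q ((k - i : ℕ) : ℝ) ^ n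

/-!
Write `T(n, k)` for the alternating sum in `S(n,k;q)`, so `T(n, k) = q^{C(k,2)} [k]_q! S(n,k;q)`.
Since `[x]_q = [k]_q + q^k [x-k]_q`, multiplication by `[x]_q` acts on the basis `binom(x,k)_q` by
`[x]_q binom(x,k)_q = [k]_q binom(x,k)_q + q^k [k+1]_q binom(x,k+1)_q`. Hence the expansion
`[x]_q^n = Σ_k binom(x,k)_q T(n,k)` follows by induction on `n`, because `T` obeys the matching
recurrence `T(n+1,k+1) = [k+1]_q (T(n,k+1) + q^k T(n,k))` and vanishes for `k > n`.
The recurrence comes from `[k+1-i]_q = [k+1]_q - q^{k+1-i} [i]_q` together with the absorption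
identity `[i+1]_q binom(k+1,i+1)_q = [k+1]_q binom(k,i)_q`; the vanishing of `T(0, k+1)` is the
telescoped q-Pascal rule.
-/

section

variable {q : ℝ}

@[simp]
lemma qnum_zero_right : qnum q 0 = 0 := by simp [qnum]

lemma qnum_add (hq0 : 0 < q) (a b : ℝ) : qnum q (a + b) = qnum q a + q ^ a * qnum q b := by
  simp only [qnum, Real.rpow_add hq0]
  ring

lemma qnum_natCast_eq_geom_sum (hq1 : q ≠ 1) (m : ℕ) : qnum q m = ∑ i ∈ range m, q ^ i := by
  rw [qnum, Real.rpow_natCast, geom_sum_eq hq1, ← neg_div_neg_eq, neg_sub, neg_sub]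

lemma qnum_natCast_add_one_pos (hq0 : 0 < q) (hq1 : q ≠ 1) (m : ℕ) :
    0 < qnum q ((m : ℝ) + 1) := by
  rw [← Nat.cast_add_one, qnum_natCast_eq_geom_sum hq1]
  exact sum_pos (fun i _ => pow_pos hq0 i) nonempty_range_add_one

@[simp]
lemma qfac_zero : qfac q 0 = 1 := prod_range_zero _

lemma qfac_succ (n : ℕ) : qfac q (n + 1) = qfac q n * qnum q ((n : ℝ) + 1) :=
  prod_range_succ _ _

lemma qfac_pos (hq0 : 0 < q) (hq1 : q ≠ 1) (n : ℕ) : 0 < qfac q n :=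
  prod_pos fun j _ => qnum_natCast_add_one_pos hq0 hq1 j

lemma qbinom_of_eq_add {n i m : ℕ} (h : n = i + m) :
    qbinom q n i = qfac q n / (qfac q i * qfac q m) := by
  subst h
  rw [qbinom, Nat.add_sub_cancel_left]

@[simp]
lemma qbinom_zero_right (hq0 : 0 < q) (hq1 : q ≠ 1) (n : ℕ) : qbinom q n 0 = 1 := by
  simp [qbinom, (qfac_pos hq0 hq1 n).ne']

@[simp]
lemma qbinom_self (hq0 : 0 < q) (hq1 : q ≠ 1) (n : ℕ) : qbinom q n n = 1 := by
  simp [qbinom, (qfac_pos hq0 hq1 n).ne']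

lemma qbinom_succ_succ (hq0 : 0 < q) (hq1 : q ≠ 1) {k i : ℕ} (h : i < k) :
    qbinom q (k + 1) (i + 1) = q ^ (i + 1) * qbinom q k (i + 1) + qbinom q k i := by
  obtain ⟨m, rfl⟩ : ∃ m, k = i + 1 + m := ⟨k - (i + 1), by omega⟩
  have hsplit : qnum q ((↑(i + 1 + m) : ℝ) + 1)
      = qnum q ((i : ℝ) + 1) + q ^ (i + 1) * qnum q ((m : ℝ) + 1) := by
    rw [show ((↑(i + 1 + m) : ℝ) + 1) = ((i : ℝ) + 1) + ((m : ℝ) + 1) by push_cast; ring,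
      qnum_add hq0, ← Nat.cast_add_one i, Real.rpow_natCast]
  rw [qbinom_of_eq_add (m := m + 1) (by omega), qbinom_of_eq_add (m := m) rfl,
    qbinom_of_eq_add (m := m + 1) (by omega)]
  simp only [qfac_succ, hsplit]
  have := (qfac_pos hq0 hq1 i).ne'
  have := (qfac_pos hq0 hq1 m).ne'
  have := (qnum_natCast_add_one_pos hq0 hq1 i).ne'
  have := (qnum_natCast_add_one_pos hq0 hq1 m).ne'
  field_simp
  ring

lemma qnum_mul_qbinom_succ_succ (hq0 : 0 < q) (hq1 : q ≠ 1) {k i : ℕ} (h : i ≤ k) :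
    qnum q ((i : ℝ) + 1) * qbinom q (k + 1) (i + 1) = qnum q ((k : ℝ) + 1) * qbinom q k i := by
  rw [qbinom_of_eq_add (m := k - i) (by omega), qbinom_of_eq_add (m := k - i) (by omega),
    qfac_succ, qfac_succ]
  have := (qfac_pos hq0 hq1 i).ne'
  have := (qfac_pos hq0 hq1 (k - i)).ne'
  have := (qnum_natCast_add_one_pos hq0 hq1 i).ne'
  field_simp

lemma qnum_mul_qbinomR (hq0 : 0 < q) (hq1 : q ≠ 1) (x : ℝ) (k : ℕ) :
    qnum q x * qbinomR q x k
      = qnum q k * qbinomR q x k + q ^ k * qnum q ((k : ℝ) + 1) * qbinomR q x (k + 1) := by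
  have hx : qnum q x = qnum q k + q ^ k * qnum q (x - k) := by
    rw [← Real.rpow_natCast, ← qnum_add hq0, add_sub_cancel]
  rw [qbinomR, qbinomR, prod_range_succ, qfac_succ, hx]
  have := (qfac_pos hq0 hq1 k).ne'
  have := (qnum_natCast_add_one_pos hq0 hq1 k).ne'
  field_simp

lemma pow_choose_two_succ (j : ℕ) : q ^ (j + 1).choose 2 = q ^ j.choose 2 * q ^ j := by
  rw [Nat.choose_succ_succ', Nat.choose_one_right, pow_add, mul_comm]

lemma qnum_natCast_sub (hq0 : 0 < q) {m i : ℕ} (h : i ≤ m) :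
    qnum q ((m - i : ℕ) : ℝ) = qnum q m - q ^ (m - i) * qnum q i := by
  have := qnum_add hq0 ((m - i : ℕ) : ℝ) i
  rw [← Nat.cast_add, Nat.sub_add_cancel h, Real.rpow_natCast] at this
  linarith

noncomputable def qStirlingNumerator (q : ℝ) (n k : ℕ) : ℝ :=
  ∑ i ∈ range (k + 1),
    (-1 : ℝ) ^ i * q ^ i.choose 2 * qbinom q k i * qnum q ((k - i : ℕ) : ℝ) ^ n

lemma qStirling_eq_div_mul_qStirlingNumerator (q : ℝ) (n k : ℕ) :
    qStirling q n k = (q ^ k.choose 2)⁻¹ / qfac q k * qStirlingNumerator q n k :=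
  rfl

@[simp]
lemma qStirlingNumerator_zero_zero : qStirlingNumerator q 0 0 = 1 := by
  simp [qStirlingNumerator, qbinom]

@[simp]
lemma qStirlingNumerator_succ_zero (n : ℕ) : qStirlingNumerator q (n + 1) 0 = 0 := by
  simp [qStirlingNumerator]

lemma qStirlingNumerator_zero_succ (hq0 : 0 < q) (hq1 : q ≠ 1) (k : ℕ) :
    qStirlingNumerator q 0 (k + 1) = 0 := by
  set g : ℕ → ℝ := fun j => (-1 : ℝ) ^ (j + 1) * q ^ (j + 1).choose 2 * qbinom q k j
  have hpascal : ∀ i ∈ range k,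
      (-1 : ℝ) ^ (i + 1) * q ^ (i + 1).choose 2 * qbinom q (k + 1) (i + 1) = g i - g (i + 1) := by
    intro i hi
    simp only [g]
    rw [qbinom_succ_succ hq0 hq1 (mem_range.1 hi), pow_choose_two_succ (i + 1)]
    ring
  simp only [qStirlingNumerator, pow_zero, mul_one]
  rw [sum_range_succ', sum_range_succ, sum_congr rfl hpascal, sum_range_sub']
  simp [g, qbinom_zero_right hq0 hq1, qbinom_self hq0 hq1]

lemma qStirlingNumerator_succ_succ (hq0 : 0 < q) (hq1 : q ≠ 1) (n k : ℕ) :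
    qStirlingNumerator q (n + 1) (k + 1)
      = qnum q ((k : ℝ) + 1)
          * (qStirlingNumerator q n (k + 1) + q ^ k * qStirlingNumerator q n k) := by
  set c : ℕ → ℝ := fun i => (-1 : ℝ) ^ i * q ^ i.choose 2 * qbinom q (k + 1) i
  have hsplit : ∀ i ∈ range (k + 2),
      c i * qnum q ((k + 1 - i : ℕ) : ℝ) ^ (n + 1)
        = qnum q ((k : ℝ) + 1) * (c i * qnum q ((k + 1 - i : ℕ) : ℝ) ^ n)
          - c i * q ^ (k + 1 - i) * qnum q i * qnum q ((k + 1 - i : ℕ) : ℝ) ^ n := by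
    intro i hi
    rw [pow_succ, qnum_natCast_sub hq0 (m := k + 1) (Nat.lt_succ_iff.1 (mem_range.1 hi))]
    push_cast
    ring
  have habsorb :
      ∑ i ∈ range (k + 2),
          c i * q ^ (k + 1 - i) * qnum q i * qnum q ((k + 1 - i : ℕ) : ℝ) ^ n
        = -(q ^ k * qnum q ((k : ℝ) + 1) * qStirlingNumerator q n k) := by
    rw [sum_range_succ', qStirlingNumerator, mul_sum, ← sum_neg_distrib]
    simp only [Nat.cast_zero, qnum_zero_right, mul_zero, zero_mul, add_zero]
    refine sum_congr rfl fun j hj => ?_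
    obtain ⟨m, rfl⟩ := Nat.exists_eq_add_of_le (Nat.lt_succ_iff.1 (mem_range.1 hj))
    have habs := qnum_mul_qbinom_succ_succ hq0 hq1 (Nat.le_add_right j m)
    simp only [c]
    rw [show j + m + 1 - (j + 1) = m by omega, Nat.add_sub_cancel_left, Nat.cast_add_one,
      pow_choose_two_succ, pow_add]
    linear_combination (-1 : ℝ) ^ (j + 1) * q ^ j.choose 2 * q ^ j * q ^ m * qnum q m ^ n * habs
  simp only [qStirlingNumerator]
  rw [sum_congr rfl hsplit, sum_sub_distrib, ← mul_sum, habsorb, qStirlingNumerator]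
  ring

lemma qStirlingNumerator_eq_zero_of_lt (hq0 : 0 < q) (hq1 : q ≠ 1) {n k : ℕ} (h : n < k) :
    qStirlingNumerator q n k = 0 := by
  induction n generalizing k with
  | zero =>
    obtain ⟨k, rfl⟩ := Nat.exists_eq_add_one_of_ne_zero h.ne'
    exact qStirlingNumerator_zero_succ hq0 hq1 k
  | succ n ih =>
    obtain ⟨k, rfl⟩ := Nat.exists_eq_add_one_of_ne_zero (Nat.zero_lt_of_lt h).ne'
    rw [qStirlingNumerator_succ_succ hq0 hq1, ih (by omega), ih (by omega)]
    ring

lemma qnum_pow_eq_sum_qbinomR_mul_qStirlingNumerator (hq0 : 0 < q) (hq1 : q ≠ 1) (x : ℝ)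
    (n : ℕ) :
    qnum q x ^ n = ∑ k ∈ range (n + 1), qbinomR q x k * qStirlingNumerator q n k := by
  induction n with
  | zero => simp [qbinomR]
  | succ n ih =>
    have hshift : ∑ k ∈ range (n + 1), qnum q k * qbinomR q x k * qStirlingNumerator q n k
        = ∑ k ∈ range (n + 1),
            qnum q ((k : ℝ) + 1) * qbinomR q x (k + 1) * qStirlingNumerator q n (k + 1) := by
      rw [sum_range_succ', sum_range_succ,
        qStirlingNumerator_eq_zero_of_lt hq0 hq1 (lt_add_one n)]
      simp
    calc qnum q x ^ (n + 1)
          = ∑ k ∈ range (n + 1), qnum q x * qbinomR q x k * qStirlingNumerator q n k := by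
          rw [pow_succ', ih, mul_sum]
          simp_rw [mul_assoc]
      _ = ∑ k ∈ range (n + 1), (qnum q k * qbinomR q x k * qStirlingNumerator q n k
            + q ^ k * qnum q ((k : ℝ) + 1) * qbinomR q x (k + 1) * qStirlingNumerator q n k) := by
          simp_rw [qnum_mul_qbinomR hq0 hq1, add_mul]
      _ = ∑ k ∈ range (n + 1), qbinomR q x (k + 1) * qStirlingNumerator q (n + 1) (k + 1) := by
          rw [sum_add_distrib, hshift, ← sum_add_distrib]
          refine sum_congr rfl fun k _ => ?_
          rw [qStirlingNumerator_succ_succ hq0 hq1]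
          ring
      _ = ∑ k ∈ range (n + 2), qbinomR q x k * qStirlingNumerator q (n + 1) k := by
          rw [sum_range_succ' _ (n + 1), qStirlingNumerator_succ_zero, mul_zero, add_zero]

end

/-- Expansion of `[x]_q^n` in terms of Gaussian binomial coefficients and the
`q`-extension of the second kind Stirling numbers:
`[x]_q^n = Σ_{k=0}^{n} q^{C(k,2)} binom(x,k)_q [k]_q! S(n,k;q)`. -/
theorem qnum_pow_eq_sum_qStirling
    (q : ℝ) (hq0 : 0 < q) (hq1 : q < 1) (x : ℝ) (n : ℕ) :
    qnum q x ^ n =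
      ∑ k ∈ Finset.range (n + 1),
        q ^ k.choose 2 * qbinomR q x k * qfac q k * qStirling q n k := by
  rw [qnum_pow_eq_sum_qbinomR_mul_qStirlingNumerator hq0 hq1.ne x n]
  refine sum_congr rfl fun k _ => ?_
  have := (qfac_pos hq0 hq1.ne k).ne'
  have := pow_ne_zero (k.choose 2) hq0.ne'
  rw [qStirling_eq_div_mul_qStirlingNumerator]
  field_simp
end
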